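/- For every odd integer n ≥ 1, real a ≥ 1, and x ∈ (−1, 1): ∑_{j=0}^n C(n + a − j, n − j) U_j(x) ≥ 2(1 + x), with equality if and only if (n = 1, a = 1) or (n = 3, a = 1, x = 0). -/

import Mathlib

/-!
Write `a = b + 2`. Since `(1 - t)^{-(b+3)} = (1 - t)^{-(b+1)} (1 - t)^{-2}`, the coefficients
satisfy `gbinom (b + 2) m = ∑ᵢ gbinom b i * (m - i + 1)`, hence
`Lam n (b + 2) x = ∑ᵢ gbinom b i * Lam (n - i) 1 x`, and `gbinom b i ≥ 0` for `b ≥ -1`.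
At `a = 1` the sums are sums of squares: `Lam (2q+1) 1 x = 2(1+x) ∑_{i ≤ q} U_i(x)^2` and
`Lam (2q) 1 x = 1 + ∑_{i < q} (U_i(x) + U_{i+1}(x))^2`, both from the addition formula
`U_{m+n} = U_m U_n - U_{m-1} U_{n-1}`. For `n = 2q + 1`, keeping only the terms `i = 0, 1` gives
`Lam n a x ≥ 2(1+x) ∑_{i ≤ q} U_i(x)^2 + (a - 1) Lam (2q) 1 x ≥ 2(1+x)`; equality forces `a = 1`
and `U_1(x) = ⋯ = U_q(x) = 0`, impossible for `q ≥ 2` because `U_1 = 2X` and `U_2 = 4X^2 - 1`.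
-/

open Real Finset

/-- Generalized binomial coefficient `(a + k choose k) = ∏_{ν=1}^{k} (a+ν)/ν`. -/
noncomputable def gbinom (a : ℝ) (k : ℕ) : ℝ := ∏ ν ∈ Finset.Icc 1 k, (a + ν) / ν

/-- `Lam n a x = ∑_{j=0}^n C(n+a−j, n−j) U_j(x)`, with `U_j` the Chebyshev
polynomial of the second kind. -/
noncomputable def Lam (n : ℕ) (a : ℝ) (x : ℝ) : ℝ :=
  ∑ j ∈ Finset.range (n + 1), gbinom a (n - j) * (Polynomial.Chebyshev.U ℝ j).eval x

open Polynomial Polynomial.Chebyshev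

namespace Polynomial.Chebyshev

variable (R : Type*) [CommRing R]

theorem U_add (m n : ℤ) : U R (m + n) = U R m * U R n - U R (m - 1) * U R (n - 1) := by
  induction n using Polynomial.Chebyshev.induct with
  | zero => simp
  | one => simp [U_add_one]; ring
  | add_two n ih1 ih2 =>
    have h₁ := U_add_two R (m + n)
    have h₂ := U_add_two R n
    have h₃ := U_add_two R ((n : ℤ) - 1)
    linear_combination (norm := ring_nf) h₁ - U R m * h₂ + U R (m - 1) * h₃ + 2 * X * ih1 - ih2
  | neg_add_one n ih1 ih2 =>
    have h₁ := U_sub_one R (m - n)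
    have h₂ := U_sub_one R (-(n : ℤ))
    have h₃ := U_sub_one R (-(n : ℤ) - 1)
    linear_combination (norm := ring_nf) h₁ - U R m * h₂ + U R (m - 1) * h₃ + 2 * X * ih1 - ih2

theorem U_two_mul_add_two (q : ℕ) : U R (2 * q + 2) = U R (q + 1) ^ 2 - U R q ^ 2 := by
  have h := U_add R (q + 1) (q + 1)
  rw [add_sub_cancel_right] at h
  rw [show (2 * q + 2 : ℤ) = q + 1 + (q + 1) by ring, h]; ring

theorem U_two_mul_add_three (q : ℕ) : U R (2 * q + 3) = U R (q + 1) * (U R (q + 2) - U R q) := by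
  have h := U_add R (q + 1) (q + 2)
  rw [add_sub_cancel_right, show (q : ℤ) + 2 - 1 = q + 1 by ring] at h
  rw [show (2 * q + 3 : ℤ) = q + 1 + (q + 2) by ring, h]; ring

theorem two_mul_sum_U_add_U_two_mul_add_one (q : ℕ) :
    2 * ∑ j ∈ range (2 * q + 1), U R j + U R (2 * q + 1) = 2 * (1 + X) * U R q ^ 2 := by
  induction q with
  | zero => simp; ring
  | succ q ih =>
    have h₁ := U_add_two R (2 * q + 1)
    rw [show 2 * (q + 1) + 1 = 2 * q + 1 + 1 + 1 by ring, sum_range_succ, sum_range_succ]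
    push_cast
    linear_combination (norm := ring_nf) ih + h₁ + 2 * (1 + X) * U_two_mul_add_two R q

theorem two_mul_sum_U_add_U_two_mul_add_two (q : ℕ) :
    2 * ∑ j ∈ range (2 * q + 2), U R j + U R (2 * q + 2) = (U R q + U R (q + 1)) ^ 2 := by
  induction q with
  | zero => simp [sum_range_succ, U_two]; ring
  | succ q ih =>
    have h₁ := U_add_two R (2 * q + 2)
    have h₂ := U_add_two R q
    rw [show 2 * (q + 1) + 2 = 2 * q + 2 + 1 + 1 by ring, sum_range_succ, sum_range_succ]
    push_cast
    linear_combination (norm := ring_nf) ih + h₁ + 2 * (1 + X) * U_two_mul_add_three R q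
      + (U R q - U R (q + 2)) * h₂

end Polynomial.Chebyshev

@[simp]
lemma gbinom_zero (a : ℝ) : gbinom a 0 = 1 := by simp [gbinom]

lemma gbinom_succ (a : ℝ) (k : ℕ) : gbinom a (k + 1) = gbinom a k * ((a + (k + 1)) / (k + 1)) := by
  rw [gbinom, gbinom, prod_Icc_succ_top (by omega)]
  push_cast; rfl

lemma gbinom_one_left (k : ℕ) : gbinom 1 k = k + 1 := by
  induction k with
  | zero => simp
  | succ k ih =>
    rw [gbinom_succ, ih]
    field_simp
    push_cast; ring

lemma gbinom_one_right (b : ℝ) : gbinom b 1 = b + 1 := by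
  simpa using gbinom_succ b 0

lemma gbinom_nonneg {b : ℝ} (hb : -1 ≤ b) (k : ℕ) : 0 ≤ gbinom b k :=
  prod_nonneg fun ν hν => by
    have : (1 : ℝ) ≤ ν := by exact_mod_cast (mem_Icc.1 hν).1
    exact div_nonneg (by linarith) (by linarith)

lemma gbinom_succ_eq_mul_div (b : ℝ) (k : ℕ) :
    gbinom b (k + 1) = gbinom (b + 1) k * (b + 1) / (k + 1) := by
  induction k with
  | zero => simp [gbinom_one_right]
  | succ k ih =>
    rw [gbinom_succ b (k + 1), ih, gbinom_succ (b + 1) k]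
    push_cast
    field_simp
    ring

lemma gbinom_succ_succ (b : ℝ) (k : ℕ) :
    gbinom (b + 1) (k + 1) = gbinom (b + 1) k + gbinom b (k + 1) := by
  rw [gbinom_succ_eq_mul_div b k, gbinom_succ (b + 1) k]
  field_simp
  ring

lemma sum_range_gbinom (b : ℝ) (m : ℕ) : ∑ i ∈ range (m + 1), gbinom b i = gbinom (b + 1) m := by
  induction m with
  | zero => simp
  | succ m ih => rw [sum_range_succ, ih, gbinom_succ_succ]

lemma gbinom_add_two (b : ℝ) (m : ℕ) :
    gbinom (b + 2) m = ∑ i ∈ range (m + 1), gbinom b i * gbinom 1 (m - i) := by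
  induction m with
  | zero => simp
  | succ m ih =>
    have hsucc : ∀ i ∈ range (m + 1),
        gbinom b i * gbinom 1 (m + 1 - i) = gbinom b i * gbinom 1 (m - i) + gbinom b i := by
      intro i hi
      rw [gbinom_one_left, gbinom_one_left, Nat.sub_add_comm (mem_range_succ_iff.1 hi)]
      push_cast; ring
    calc gbinom (b + 2) (m + 1) = gbinom (b + 2) m + gbinom (b + 1) (m + 1) := by
          rw [show b + 2 = b + 1 + 1 by ring, gbinom_succ_succ]
      _ = ∑ i ∈ range (m + 1), gbinom b i * gbinom 1 (m - i) + ∑ i ∈ range (m + 2), gbinom b i := by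
          rw [ih, sum_range_gbinom]
      _ = _ := by
          rw [sum_range_succ _ (m + 1), sum_range_succ _ (m + 1), sum_congr rfl hsucc, sum_add_distrib]
          simp [add_assoc]

lemma Lam_one_add_two (m : ℕ) (x : ℝ) :
    Lam (m + 2) 1 x = Lam m 1 x + (2 * ∑ j ∈ range (m + 2), U ℝ j + U ℝ (m + 2)).eval x := by
  have h : ∀ j ∈ range (m + 1), gbinom 1 (m + 2 - j) * (U ℝ j).eval x
      = gbinom 1 (m - j) * (U ℝ j).eval x + 2 * (U ℝ j).eval x := by
    intro j hj
    rw [gbinom_one_left, gbinom_one_left, show m + 2 - j = m - j + 2 by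
      have := mem_range.1 hj; omega]
    push_cast; ring
  rw [Lam, Lam, sum_range_succ _ (m + 2), sum_range_succ _ (m + 1), sum_congr rfl h,
    sum_add_distrib, ← mul_sum]
  simp [sum_range_succ, eval_finsetSum, gbinom_one_left]
  ring

lemma Lam_one_two_mul_add_one (q : ℕ) (x : ℝ) :
    Lam (2 * q + 1) 1 x = 2 * (1 + x) * ∑ i ∈ range (q + 1), (U ℝ i).eval x ^ 2 := by
  induction q with
  | zero => simp [Lam, gbinom_one_left, sum_range_succ]; ring
  | succ q ih =>
    have h := congrArg (eval x) (two_mul_sum_U_add_U_two_mul_add_one ℝ (q + 1))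
    rw [show 2 * (q + 1) + 1 = 2 * q + 1 + 2 by ring, Lam_one_add_two, ih, sum_range_succ _ (q + 1)]
    push_cast at h ⊢
    simp only [eval_add, eval_mul, eval_pow, eval_X, eval_one, eval_ofNat] at h ⊢
    linear_combination (norm := ring_nf) h

lemma Lam_one_two_mul (q : ℕ) (x : ℝ) :
    Lam (2 * q) 1 x = 1 + ∑ i ∈ range q, ((U ℝ i).eval x + (U ℝ (i + 1)).eval x) ^ 2 := by
  induction q with
  | zero => simp [Lam]
  | succ q ih =>
    have h := congrArg (eval x) (two_mul_sum_U_add_U_two_mul_add_two ℝ q)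
    rw [show 2 * (q + 1) = 2 * q + 2 by ring, Lam_one_add_two, ih, sum_range_succ _ q]
    push_cast at h ⊢
    simp only [eval_add, eval_pow] at h ⊢
    linear_combination h

lemma one_le_Lam_one_two_mul (q : ℕ) (x : ℝ) : 1 ≤ Lam (2 * q) 1 x := by
  rw [Lam_one_two_mul]
  exact le_add_of_nonneg_right (sum_nonneg fun i _ => sq_nonneg _)

lemma one_le_sum_sq_U (x : ℝ) (q : ℕ) : 1 ≤ ∑ i ∈ range (q + 1), (U ℝ i).eval x ^ 2 := by
  rw [sum_range_succ']
  simpa using sum_nonneg fun i _ => sq_nonneg _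

lemma Lam_one_nonneg {x : ℝ} (hx : -1 ≤ x) (m : ℕ) : 0 ≤ Lam m 1 x := by
  obtain ⟨q, rfl | rfl⟩ := Nat.even_or_odd' m
  · exact zero_le_one.trans (one_le_Lam_one_two_mul q x)
  · rw [Lam_one_two_mul_add_one]
    exact mul_nonneg (by linarith) (zero_le_one.trans (one_le_sum_sq_U x q))

lemma Lam_add_two_eq_sum (n : ℕ) (b x : ℝ) :
    Lam n (b + 2) x = ∑ i ∈ range (n + 1), gbinom b i * Lam (n - i) 1 x := by
  calc Lam n (b + 2) x = ∑ j ∈ range (n + 1), ∑ i ∈ range (n - j + 1),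
        gbinom b i * gbinom 1 (n - j - i) * (U ℝ j).eval x := by
        simp only [Lam, gbinom_add_two, sum_mul]
    _ = ∑ i ∈ range (n + 1), ∑ j ∈ range (n - i + 1),
        gbinom b i * gbinom 1 (n - j - i) * (U ℝ j).eval x :=
        sum_comm' fun j i => by simp only [mem_range]; omega
    _ = _ := by simp only [Lam, mul_sum, mul_assoc, Nat.sub_right_comm]

lemma Lam_one_add_mul_Lam_one_le {a x : ℝ} (ha : 1 ≤ a) (hx : -1 ≤ x) (n : ℕ) :
    Lam (n + 1) 1 x + (a - 1) * Lam n 1 x ≤ Lam (n + 1) a x := by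
  conv_rhs => rw [← sub_add_cancel a 2, Lam_add_two_eq_sum, sum_range_succ', sum_range_succ']
  have hrest : 0 ≤ ∑ i ∈ range n, gbinom (a - 2) (i + 1 + 1) * Lam (n + 1 - (i + 1 + 1)) 1 x :=
    sum_nonneg fun i _ => mul_nonneg (gbinom_nonneg (by linarith) _) (Lam_one_nonneg hx _)
  simp only [zero_add, gbinom_one_right, gbinom_zero, Nat.add_sub_cancel, Nat.sub_zero, one_mul,
    show a - 2 + 1 = a - 1 by ring]
  linarith

lemma sum_sq_U_eq_one_iff (x : ℝ) (q : ℕ) :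
    ∑ i ∈ range (q + 1), (U ℝ i).eval x ^ 2 = 1 ↔ q = 0 ∨ (q = 1 ∧ x = 0) := by
  constructor
  · intro h
    rw [sum_range_succ', Nat.cast_zero, U_zero, eval_one, one_pow, add_eq_right] at h
    have hU : ∀ i < q, (U ℝ (i + 1)).eval x = 0 := fun i hi =>
      pow_eq_zero_iff two_ne_zero |>.1 <|
        (sum_eq_zero_iff_of_nonneg fun i _ => sq_nonneg _).1 h i (mem_range.2 hi)
    rcases q with _ | _ | q
    · exact .inl rfl
    · have := hU 0 one_pos
      norm_num at this
      exact .inr ⟨rfl, this⟩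
    · have h₁ := hU 0 (by omega)
      have h₂ := hU 1 (by omega)
      norm_num at h₁
      norm_num [one_add_one_eq_two, U_two, h₁] at h₂
  · rintro (rfl | ⟨rfl, rfl⟩) <;> simp [sum_range_succ]

theorem stmt_16_general (n : ℕ) (hodd : Odd n) (a : ℝ) (ha : 1 ≤ a)
    (x : ℝ) (hx : x ∈ Set.Ioo (-1 : ℝ) 1) :
    2 * (1 + x) ≤ Lam n a x ∧
    (Lam n a x = 2 * (1 + x) ↔ (n = 1 ∧ a = 1) ∨ (n = 3 ∧ a = 1 ∧ x = 0)) := by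
  obtain ⟨q, rfl⟩ := hodd
  have hx₁ : 0 < 1 + x := by linarith [hx.1]
  have hLam := Lam_one_two_mul_add_one q x
  have hS := one_le_sum_sq_U x q
  have hL := one_le_Lam_one_two_mul q x
  have hle := Lam_one_add_mul_Lam_one_le ha (hx.1.le) (2 * q)
  refine ⟨by nlinarith, fun h => ?_, ?_⟩
  · have ha₁ : a = 1 := by nlinarith
    have hS₁ : ∑ i ∈ range (q + 1), (U ℝ i).eval x ^ 2 = 1 := by nlinarith
    rcases (sum_sq_U_eq_one_iff x q).1 hS₁ with rfl | ⟨rfl, rfl⟩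
    · exact Or.inl ⟨rfl, ha₁⟩
    · exact Or.inr ⟨rfl, ha₁, rfl⟩
  · rintro (⟨hn, rfl⟩ | ⟨hn, rfl, rfl⟩)
    · rw [hLam, (sum_sq_U_eq_one_iff x q).2 (.inl (by omega)), mul_one]
    · rw [hLam, (sum_sq_U_eq_one_iff 0 q).2 (.inr ⟨by omega, rfl⟩), mul_one]

theorem stmt_16 (n : ℕ) (hn : 1 ≤ n) (hodd : Odd n) (a : ℝ) (ha : 1 ≤ a)
    (x : ℝ) (hx : x ∈ Set.Ioo (-1 : ℝ) 1) :
    2 * (1 + x) ≤ Lam n a x ∧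
    (Lam n a x = 2 * (1 + x) ↔ (n = 1 ∧ a = 1) ∨ (n = 3 ∧ a = 1 ∧ x = 0)) :=
  stmt_16_general n hodd a ha x hx
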